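/- Let 𝔩 be the F₉-Lie algebra with brackets [E₀,E₁] = αE₁, [E₀,E₂] = -αE₂, [E₁,E₂] = 0 and the standard B-metric g. Then the nonzero covariant derivatives are ∇_{E₁}E₁ = ∇_{E₂}E₂ = αE₀, ∇_{E₁}E₀ = -αE₁, ∇_{E₂}E₀ = αE₂, and the curvature components satisfy R(E₀,E₁,E₀,E₁) = α², R(E₀,E₂,E₀,E₂) = -α², R(E₁,E₂,E₁,E₂) = α². -/

import Mathlib

noncomputable section

/-- Standard basis of ℝ³. -/
def E3 (i : Fin 3) : Fin 3 → ℝ := Pi.single i 1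

/-- The B-metric g with g(e₀,e₀)=g(e₁,e₁)=1, g(e₂,e₂)=-1, off-diagonal zero. -/
def gB (x y : Fin 3 → ℝ) : ℝ := x 0 * y 0 + x 1 * y 1 - x 2 * y 2

/-- The endomorphism φ: φe₀ = 0, φe₁ = e₂, φe₂ = -e₁. -/
def phi3 (x : Fin 3 → ℝ) : Fin 3 → ℝ := ![0, -x 2, x 1]

/-- The 1-form η = e₀*. -/
def eta3 (x : Fin 3 → ℝ) : ℝ := x 0
/-- Curvature tensor R(x,y)z = ∇ₓ∇ᵧz - ∇ᵧ∇ₓz - ∇_{[x,y]}z of a bilinear connection. -/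
def curv (nabla : (Fin 3 → ℝ) →ₗ[ℝ] (Fin 3 → ℝ) →ₗ[ℝ] (Fin 3 → ℝ))
    (br : (Fin 3 → ℝ) → (Fin 3 → ℝ) → (Fin 3 → ℝ)) (x y z : Fin 3 → ℝ) : Fin 3 → ℝ :=
  nabla x (nabla y z) - nabla y (nabla x z) - nabla (br x y) z

/-- Curvature components R(Eᵢ,Eⱼ,Eₖ,Eₗ) = g(R(Eᵢ,Eⱼ)Eₖ, Eₗ). -/
def Rc (nabla : (Fin 3 → ℝ) →ₗ[ℝ] (Fin 3 → ℝ) →ₗ[ℝ] (Fin 3 → ℝ))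
    (br : (Fin 3 → ℝ) → (Fin 3 → ℝ) → (Fin 3 → ℝ)) (i j k l : Fin 3) : ℝ :=
  gB (curv nabla br (E3 i) (E3 j) (E3 k)) (E3 l)

/-- Ricci tensor ρⱼₖ = R₀ⱼₖ₀ + R₁ⱼₖ₁ - R₂ⱼₖ₂. -/
def ricci (nabla : (Fin 3 → ℝ) →ₗ[ℝ] (Fin 3 → ℝ) →ₗ[ℝ] (Fin 3 → ℝ))
    (br : (Fin 3 → ℝ) → (Fin 3 → ℝ) → (Fin 3 → ℝ)) (j k : Fin 3) : ℝ :=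
  Rc nabla br 0 j k 0 + Rc nabla br 1 j k 1 - Rc nabla br 2 j k 2

/-- Scalar curvature τ = ρ₀₀ + ρ₁₁ - ρ₂₂. -/
def scal (nabla : (Fin 3 → ℝ) →ₗ[ℝ] (Fin 3 → ℝ) →ₗ[ℝ] (Fin 3 → ℝ))
    (br : (Fin 3 → ℝ) → (Fin 3 → ℝ) → (Fin 3 → ℝ)) : ℝ :=
  ricci nabla br 0 0 + ricci nabla br 1 1 - ricci nabla br 2 2

/-- The F₉-bracket: [E₀,E₁] = αE₁, [E₀,E₂] = -αE₂, [E₁,E₂] = 0. -/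
def brF9 (α : ℝ) (x y : Fin 3 → ℝ) : Fin 3 → ℝ :=
  ![0, α * (x 0 * y 1 - x 1 * y 0), -α * (x 0 * y 2 - x 2 * y 0)]

/-!
Since `gB` is nondegenerate, the Koszul formula on basis vectors determines a bilinear connection
completely. The explicit bilinear map `nablaF9` satisfies it, so `nabla = nablaF9`, and the
covariant derivatives and curvature components follow by direct computation.
-/

def nablaF9 (α : ℝ) : (Fin 3 → ℝ) →ₗ[ℝ] (Fin 3 → ℝ) →ₗ[ℝ] (Fin 3 → ℝ) :=
  LinearMap.mk₂ ℝ (fun x y => α • ![x 1 * y 1 + x 2 * y 2, -(x 1 * y 0), x 2 * y 0])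
    (by intros; ext m; fin_cases m <;> simp <;> ring)
    (by intros; ext m; fin_cases m <;> simp <;> ring)
    (by intros; ext m; fin_cases m <;> simp <;> ring)
    (by intros; ext m; fin_cases m <;> simp <;> ring)

theorem nablaF9_apply (α : ℝ) (x y : Fin 3 → ℝ) :
    nablaF9 α x y = α • ![x 1 * y 1 + x 2 * y 2, -(x 1 * y 0), x 2 * y 0] :=
  rfl

theorem nablaF9_koszul (α : ℝ) (i j k : Fin 3) :
    2 * gB (nablaF9 α (E3 i) (E3 j)) (E3 k) =
      gB (brF9 α (E3 i) (E3 j)) (E3 k) + gB (brF9 α (E3 k) (E3 i)) (E3 j)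
        + gB (brF9 α (E3 k) (E3 j)) (E3 i) := by
  fin_cases i <;> fin_cases j <;> fin_cases k <;>
    simp [nablaF9_apply, gB, brF9, E3] <;> ring

theorem eq_of_forall_gB_E3_eq {v w : Fin 3 → ℝ} (h : ∀ k, gB v (E3 k) = gB w (E3 k)) :
    v = w := by
  ext m
  have hm := h m
  fin_cases m <;> simp [gB, E3] at hm ⊢ <;> linarith

theorem bilin_eq_of_forall_gB_E3_eq {f f' : (Fin 3 → ℝ) →ₗ[ℝ] (Fin 3 → ℝ) →ₗ[ℝ] (Fin 3 → ℝ)}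
    (h : ∀ i j k, gB (f (E3 i) (E3 j)) (E3 k) = gB (f' (E3 i) (E3 j)) (E3 k)) : f = f' := by
  refine (Pi.basisFun ℝ (Fin 3)).ext fun i => (Pi.basisFun ℝ (Fin 3)).ext fun j => ?_
  simpa only [Pi.basisFun_apply, E3] using eq_of_forall_gB_E3_eq (h i j)

theorem eq_nablaF9_of_koszul {α : ℝ} {nabla : (Fin 3 → ℝ) →ₗ[ℝ] (Fin 3 → ℝ) →ₗ[ℝ] (Fin 3 → ℝ)}
    (hK : ∀ i j k : Fin 3, 2 * gB (nabla (E3 i) (E3 j)) (E3 k) =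
      gB (brF9 α (E3 i) (E3 j)) (E3 k) + gB (brF9 α (E3 k) (E3 i)) (E3 j)
        + gB (brF9 α (E3 k) (E3 j)) (E3 i)) :
    nabla = nablaF9 α :=
  bilin_eq_of_forall_gB_E3_eq fun i j k => by linarith [hK i j k, nablaF9_koszul α i j k]

/-- covariant derivatives and curvature components in the F₉-case. -/
theorem F9_curvature (α : ℝ)
    (nabla : (Fin 3 → ℝ) →ₗ[ℝ] (Fin 3 → ℝ) →ₗ[ℝ] (Fin 3 → ℝ))
    (hK : ∀ i j k : Fin 3, 2 * gB (nabla (E3 i) (E3 j)) (E3 k) =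
      gB (brF9 α (E3 i) (E3 j)) (E3 k) + gB (brF9 α (E3 k) (E3 i)) (E3 j)
        + gB (brF9 α (E3 k) (E3 j)) (E3 i)) :
    nabla (E3 1) (E3 1) = α • E3 0 ∧ nabla (E3 2) (E3 2) = α • E3 0 ∧
    nabla (E3 1) (E3 0) = -α • E3 1 ∧ nabla (E3 2) (E3 0) = α • E3 2 ∧
    Rc nabla (brF9 α) 0 1 0 1 = α ^ 2 ∧ Rc nabla (brF9 α) 0 2 0 2 = -α ^ 2 ∧
    Rc nabla (brF9 α) 1 2 1 2 = α ^ 2 := by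
  obtain rfl := eq_nablaF9_of_koszul hK
  refine ⟨?_, ?_, ?_, ?_, ?_, ?_, ?_⟩
  iterate 4 · ext m; fin_cases m <;> simp [nablaF9_apply, E3]
  all_goals simp [Rc, curv, nablaF9_apply, gB, brF9, E3]; ring
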